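/- The Match-and-Shift algorithm produces a non-wasteful integral matching: at termination, every item liked by some agent is matched whenever an unmatched agent liking it existed at its arrival, and consequently the output matching is maximal. -/
import Mathlib


open Finset

variable {A : Type*} [Fintype A] [DecidableEq A] [LinearOrder A] {k : ℕ}

/-- The set of agents that like the item arriving at step `t`. -/
def likersAt (L : List (Finset A)) (t : ℕ) : Finset A := L.getD t ∅

/-- A finset of (item index, agent) pairs is a partial matching. -/
def IsPartialMatching (P : Finset (ℕ × A)) : Prop :=
  ∀ p ∈ P, ∀ q ∈ P, (p.1 = q.1 ∨ p.2 = q.2) → p = q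

instance (P : Finset (ℕ × A)) : Decidable (IsPartialMatching P) := by
  unfold IsPartialMatching; infer_instance

/-- Optimistic valuation `V*` of the class with agents `C` for the item set `S`. -/
def Vstar (L : List (Finset A)) (C : Finset A) (S : Finset ℕ) : ℕ :=
  ((S ×ˢ C).powerset.filter
    (fun P => (∀ p ∈ P, p.2 ∈ likersAt L p.1) ∧ IsPartialMatching P)).sup Finset.card

/-- The agents of class `i`. -/
def classAgents (classOf : A → Fin k) (i : Fin k) : Finset A :=
  Finset.univ.filter fun a => classOf a = i

/-- The agent chosen by Match-and-Shift for an item with liker set `likers`, given the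
current priority order `pi` over classes and set `m` of already-matched agents: an
unmatched liker from the first class in `pi` containing one. -/
def msPick (classOf : A → Fin k) (pi : List (Fin k)) (m : Finset A)
    (likers : Finset A) : Option A :=
  match pi.find? (fun c => decide ((likers.filter fun a => classOf a = c ∧ a ∉ m).Nonempty)) with
  | some c =>
      let S := likers.filter fun a => classOf a = c ∧ a ∉ m
      if h : S.Nonempty then some (S.min' h) else none
  | none => none

/-- The state (priority order, matched agents) of Match-and-Shift before step `t`,
starting from initial priority order `pi0`, on instance `L`: the class that receives
an item is moved to the end of the priority order. -/
def msState (classOf : A → Fin k) (pi0 : List (Fin k)) (L : List (Finset A)) :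
    ℕ → List (Fin k) × Finset A
  | 0 => (pi0, ∅)
  | t + 1 =>
    let st := msState classOf pi0 L t
    match msPick classOf st.1 st.2 (likersAt L t) with
    | some a => ((st.1.erase (classOf a)) ++ [classOf a], insert a st.2)
    | none => st

/-- The agent to whom Match-and-Shift matches item `t` (if any). -/
def msAssign (classOf : A → Fin k) (pi0 : List (Fin k)) (L : List (Finset A))
    (t : ℕ) : Option A :=
  msPick classOf (msState classOf pi0 L t).1 (msState classOf pi0 L t).2 (likersAt L t)

/-- The set of items matched by Match-and-Shift to agents of class `j`. -/
def msItems (classOf : A → Fin k) (pi0 : List (Fin k)) (L : List (Finset A))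
    (j : Fin k) : Finset ℕ :=
  (Finset.range L.length).filter fun t =>
    ∃ a ∈ (Finset.univ : Finset A), msAssign classOf pi0 L t = some a ∧ classOf a = j

lemma msState_mem (classOf : A → Fin k) (pi0 : List (Fin k)) (hpi0 : ∀ c : Fin k, c ∈ pi0)
    (L : List (Finset A)) : ∀ t, ∀ c : Fin k, c ∈ (msState classOf pi0 L t).1 := by
  intro t
  induction t with
  | zero => exact hpi0
  | succ t ih =>
    intro c
    rw [msState]
    cases h : msPick classOf (msState classOf pi0 L t).1 (msState classOf pi0 L t).2
        (likersAt L t) with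
    | none => simpa [h] using ih c
    | some a =>
      simp only [h]
      by_cases hc : c = classOf a
      · simp [hc]
      · simp [List.mem_erase_of_ne hc, ih c]

lemma msPick_some (classOf : A → Fin k) (pi : List (Fin k)) (m : Finset A)
    (likers : Finset A) (hpi : ∀ c : Fin k, c ∈ pi)
    (h : ∃ a ∈ likers, a ∉ m) :
    ∃ a ∈ likers, a ∉ m ∧ msPick classOf pi m likers = some a := by
  obtain ⟨a, ha, ham⟩ := h
  have hfind : (pi.find? (fun c =>
      decide ((likers.filter fun x => classOf x = c ∧ x ∉ m).Nonempty))).isSome := by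
    rw [List.find?_isSome]
    have hne : ((likers.filter fun x => classOf x = classOf a ∧ x ∉ m)).Nonempty :=
      ⟨a, by simp [ha, ham]⟩
    exact ⟨classOf a, hpi _, by simpa using hne⟩
  obtain ⟨c, hc⟩ := Option.isSome_iff_exists.mp hfind
  have hpc := List.find?_some hc
  have hS : ((likers.filter fun x => classOf x = c ∧ x ∉ m)).Nonempty := by
    simpa using hpc
  refine ⟨(likers.filter fun x => classOf x = c ∧ x ∉ m).min' hS, ?_, ?_, ?_⟩
  · have := Finset.min'_mem _ hS
    simp only [Finset.mem_filter] at this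
    exact this.1
  · have := Finset.min'_mem _ hS
    simp only [Finset.mem_filter] at this
    exact this.2.2
  · rw [msPick, hc]
    simp [hS]

lemma msState_mono (classOf : A → Fin k) (pi0 : List (Fin k)) (L : List (Finset A))
    {s t : ℕ} (h : s ≤ t) :
    (msState classOf pi0 L s).2 ⊆ (msState classOf pi0 L t).2 := by
  induction t with
  | zero => simpa [Nat.le_zero.mp h] using Finset.Subset.refl _
  | succ t ih =>
    rcases eq_or_lt_of_le h with h' | h'
    · subst h'; exact Finset.Subset.refl _
    · refine (ih (Nat.lt_succ_iff.mp h')).trans ?_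
      rw [msState]
      cases hp : msPick classOf (msState classOf pi0 L t).1 (msState classOf pi0 L t).2
          (likersAt L t) with
      | none => simp [hp]
      | some a => simp [hp, Finset.subset_insert]

/-- Match-and-Shift is non-wasteful: whenever the arriving item is liked by some
agent unmatched at its arrival, the item is matched to such an agent; consequently
the final matching is maximal (no item left unmatched while an end-unmatched agent
likes it). -/
theorem stmt_4 {A : Type*} [Fintype A] [DecidableEq A] [LinearOrder A] {k : ℕ}
    (classOf : A → Fin k) (pi0 : List (Fin k)) (hpi0 : ∀ c : Fin k, c ∈ pi0)
    (L : List (Finset A)) :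
    (∀ t < L.length,
      (∃ a ∈ likersAt L t, a ∉ (msState classOf pi0 L t).2) →
      ∃ a ∈ likersAt L t, a ∉ (msState classOf pi0 L t).2 ∧
        msAssign classOf pi0 L t = some a) ∧
    (∀ t < L.length, ∀ a ∈ likersAt L t,
      msAssign classOf pi0 L t = none → a ∈ (msState classOf pi0 L L.length).2) := by
  have key : ∀ t < L.length,
      (∃ a ∈ likersAt L t, a ∉ (msState classOf pi0 L t).2) →
      ∃ a ∈ likersAt L t, a ∉ (msState classOf pi0 L t).2 ∧
        msAssign classOf pi0 L t = some a := by
    intro t _ h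
    exact msPick_some classOf _ _ _ (msState_mem classOf pi0 hpi0 L t) h
  refine ⟨key, ?_⟩
  intro t ht a ha hnone
  by_contra hfin
  have hat : a ∉ (msState classOf pi0 L t).2 := fun h =>
    hfin (msState_mono classOf pi0 L (Nat.le_of_lt ht) h)
  obtain ⟨b, hb, hbm, hsome⟩ := key t ht ⟨a, ha, hat⟩
  rw [hsome] at hnone
  exact Option.some_ne_none b hnone
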